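/- Suppose b* ∈ R^{2ℓ} is optimal for minimizing 1ᵀ b subject to b ≥ 0 and [D,−D] b = w, and suppose index j satisfies b*_j > 0 while the j-th column v_j of [D,−D] can be written as v_j = Σ_i c_i v_i with c ≥ 0, c_j = 0, and Σ_i c_i < 1. Then we reach a contradiction; hence every optimal b* has b*_j = 0 for all such columns j. -/

import Mathlib

/-!
Shifting the weight `b j` of column `j` onto the conical combination `c` that reproduces
that column, i.e. passing to `b + b j • (c - e_j)`, leaves `A *ᵥ b` unchanged, keeps the vector
nonnegative because `c ≥ 0`, and lowers `∑ i, b i` by `b j * (1 - ∑ i, c i) > 0`.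
-/

open Matrix

namespace Matrix

variable {m n R : Type*}

theorem mulVec_eq_sum_smul_col [Fintype n] [CommSemiring R] (A : Matrix m n R) (v : n → R) :
    A *ᵥ v = ∑ i, v i • A.col i := by
  ext k
  simp [mulVec, dotProduct, Finset.sum_apply, mul_comm]

variable [DecidableEq n] [CommRing R]

theorem mulVec_add_smul_sub_single [Fintype n] {A : Matrix m n R} {c : n → R} {j : n}
    (hcol : A *ᵥ c = A.col j) (b : n → R) (t : R) :
    A *ᵥ (b + t • (c - Pi.single j 1)) = A *ᵥ b := by
  simp [mulVec_add, mulVec_smul, mulVec_sub, hcol]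

theorem sum_add_smul_sub_single [Fintype n] (b c : n → R) (j : n) (t : R) :
    ∑ i, (b + t • (c - Pi.single j 1) : n → R) i = ∑ i, b i + t * (∑ i, c i - 1) := by
  simp [Finset.sum_add_distrib, Finset.mul_sum, mul_sub, Pi.single_apply]

variable [LinearOrder R] [IsStrictOrderedRing R]

theorem add_smul_sub_single_nonneg {b c : n → R} (hb : 0 ≤ b) (hc : 0 ≤ c) (j : n) :
    0 ≤ b + b j • (c - Pi.single j 1) := by
  intro i
  by_cases hij : i = j
  · subst hij
    have := mul_nonneg (hb i) (hc i)
    simp only [Pi.add_apply, Pi.smul_apply, Pi.sub_apply, Pi.single_eq_same, smul_eq_mul,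
      Pi.zero_apply]
    linarith
  · simpa [hij] using add_nonneg (hb i) (mul_nonneg (hb j) (hc i))

theorem exists_nonneg_mulVec_eq_sum_lt [Fintype n] {A : Matrix m n R} {b c : n → R} {j : n}
    (hb : 0 ≤ b) (hbj : 0 < b j) (hc : 0 ≤ c) (hcsum : ∑ i, c i < 1)
    (hcol : A *ᵥ c = A.col j) :
    ∃ b' : n → R, 0 ≤ b' ∧ A *ᵥ b' = A *ᵥ b ∧ ∑ i, b' i < ∑ i, b i := by
  refine ⟨b + b j • (c - Pi.single j 1), add_smul_sub_single_nonneg hb hc j,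
    mulVec_add_smul_sub_single hcol b (b j), ?_⟩
  rw [sum_add_smul_sub_single]
  linarith [mul_neg_of_pos_of_neg hbj (sub_neg.mpr hcsum)]

end Matrix

theorem optimal_unused_interior_column_general {m ℓ : ℕ} (D : Matrix (Fin m) (Fin ℓ) ℝ)
    (w : Fin m → ℝ) (bstar : Fin ℓ ⊕ Fin ℓ → ℝ)
    (hfeas : (∀ j, 0 ≤ bstar j) ∧ (Matrix.fromCols D (-D)).mulVec bstar = w)
    (hopt : ∀ b : Fin ℓ ⊕ Fin ℓ → ℝ, (∀ j, 0 ≤ b j) →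
      (Matrix.fromCols D (-D)).mulVec b = w → (∑ j, bstar j) ≤ ∑ j, b j)
    (j : Fin ℓ ⊕ Fin ℓ) (hj : 0 < bstar j)
    (c : Fin ℓ ⊕ Fin ℓ → ℝ) (hc : ∀ i, 0 ≤ c i)
    (hcsum : (∑ i, c i) < 1)
    (hcol : (fun i => Matrix.fromCols D (-D) i j) =
      ∑ i, c i • (fun k => Matrix.fromCols D (-D) k i)) :
    False := by
  obtain ⟨hbstar, rfl⟩ := hfeas
  have hcol' : fromCols D (-D) *ᵥ c = (fromCols D (-D)).col j :=
    (mulVec_eq_sum_smul_col _ c).trans hcol.symm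
  obtain ⟨b, hb, hAb, hlt⟩ := exists_nonneg_mulVec_eq_sum_lt hbstar hj hc hcsum hcol'
  exact (hopt b hb hAb).not_gt hlt

/-- If `b*` is optimal for `min 1ᵀb s.t. b ≥ 0, [D,−D]b = w`, then `b*_j = 0`
for every column `j` that is a conical combination of the other columns with
coefficient sum `< 1`: assuming `b*_j > 0` yields a contradiction. -/
theorem optimal_unused_interior_column {m ℓ : ℕ} (D : Matrix (Fin m) (Fin ℓ) ℝ)
    (w : Fin m → ℝ) (bstar : Fin ℓ ⊕ Fin ℓ → ℝ)
    (hfeas : (∀ j, 0 ≤ bstar j) ∧ (Matrix.fromCols D (-D)).mulVec bstar = w)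
    (hopt : ∀ b : Fin ℓ ⊕ Fin ℓ → ℝ, (∀ j, 0 ≤ b j) →
      (Matrix.fromCols D (-D)).mulVec b = w → (∑ j, bstar j) ≤ ∑ j, b j)
    (j : Fin ℓ ⊕ Fin ℓ) (hj : 0 < bstar j)
    (c : Fin ℓ ⊕ Fin ℓ → ℝ) (hc : ∀ i, 0 ≤ c i) (hcj : c j = 0)
    (hcsum : (∑ i, c i) < 1)
    (hcol : (fun i => Matrix.fromCols D (-D) i j) =
      ∑ i, c i • (fun k => Matrix.fromCols D (-D) k i)) :
    False :=
  optimal_unused_interior_column_general D w bstar hfeas hopt j hj c hc hcsum hcol
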